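/- arXiv:2104.08488 — 2 statements merged into one kernel-verified Lean document; each statement's English description precedes it below -/
import Mathlib

section
/- Let H be a Hilbert space (real or complex), A a positive operator on H, ε ∈ [0,1), and x, y ∈ H. Then |⟨x, y⟩_A| ≤ ε‖x‖_A‖y‖_A if and only if ‖x + λy‖_A² ≥ ‖x‖_A² − 2ε‖x‖_A‖λy‖_A for all scalars λ; i.e., x ⊥_A^ε y if and only if x ⊥_{ε(A)} y. -/
noncomputable section

/-- The seminorm induced by a positive operator `A`: `‖x‖_A = √(re ⟪A x, x⟫)`. -/
def anorm {𝕜 H : Type*} [RCLike 𝕜] [NormedAddCommGroup H] [InnerProductSpace 𝕜 H]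
    (A : H →L[𝕜] H) (x : H) : ℝ :=
  Real.sqrt (RCLike.re (inner 𝕜 (A x) x : 𝕜))

/-- The semi-inner product induced by `A`: `⟨x, y⟩_A = ⟪A x, y⟫`. -/
def ainner {𝕜 H : Type*} [RCLike 𝕜] [NormedAddCommGroup H] [InnerProductSpace 𝕜 H]
    (A : H →L[𝕜] H) (x y : H) : 𝕜 :=
  (inner 𝕜 (A x) y : 𝕜)

/-- `T` is `A`-bounded. -/
def IsABounded {𝕜 H : Type*} [RCLike 𝕜] [NormedAddCommGroup H] [InnerProductSpace 𝕜 H]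
    (A T : H →L[𝕜] H) : Prop :=
  ∃ c > 0, ∀ x : H, anorm A (T x) ≤ c * anorm A x

/-- The `A`-norm of an operator `T`: `sup {‖Tx‖_A : ‖x‖_A = 1}`. -/
def opAnorm {𝕜 H : Type*} [RCLike 𝕜] [NormedAddCommGroup H] [InnerProductSpace 𝕜 H]
    (A T : H →L[𝕜] H) : ℝ :=
  sSup {r : ℝ | ∃ x : H, anorm A x = 1 ∧ r = anorm A (T x)}

/-- `(ε,A)`-approximate orthogonality in the sense of Chmieliński, for vectors. -/
def VOrthEps {𝕜 H : Type*} [RCLike 𝕜] [NormedAddCommGroup H] [InnerProductSpace 𝕜 H]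
    (A : H →L[𝕜] H) (ε : ℝ) (x y : H) : Prop :=
  ∀ l : 𝕜, anorm A x ^ 2 - 2 * ε * anorm A x * anorm A (l • y) ≤ anorm A (x + l • y) ^ 2

/-- `(ε,A)`-approximate orthogonality in the sense of Chmieliński, for operators. -/
def OpOrthEps {𝕜 H : Type*} [RCLike 𝕜] [NormedAddCommGroup H] [InnerProductSpace 𝕜 H]
    (A T S : H →L[𝕜] H) (ε : ℝ) : Prop :=
  ∀ l : 𝕜, opAnorm A T ^ 2 - 2 * ε * opAnorm A T * opAnorm A (l • S) ≤ opAnorm A (T + l • S) ^ 2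

end
/-!
Expanding `‖x + λy‖_A²` gives `‖x‖_A² + 2 Re(λ⟨x, y⟩_A) + |λ|²‖y‖_A²`. If `|⟨x, y⟩_A| ≤ ε‖x‖_A‖y‖_A`
the middle term is at least `-2ε‖x‖_A‖λy‖_A`. Conversely, choosing `λ` of modulus `t` with
`λ⟨x, y⟩_A = -t|⟨x, y⟩_A|` yields `|⟨x, y⟩_A| ≤ ε‖x‖_A‖y‖_A + t‖y‖_A²/2` for every `t > 0`.
-/

section

variable {𝕜 H : Type*} [RCLike 𝕜] [NormedAddCommGroup H] [InnerProductSpace 𝕜 H]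

lemma anorm_smul (A : H →L[𝕜] H) (l : 𝕜) (z : H) : anorm A (l • z) = ‖l‖ * anorm A z := by
  unfold anorm
  rw [map_smul, inner_smul_left, inner_smul_right, ← mul_assoc, RCLike.conj_mul,
    ← RCLike.ofReal_pow, RCLike.re_ofReal_mul, Real.sqrt_mul (sq_nonneg _),
    Real.sqrt_sq (norm_nonneg _)]

lemma anorm_sq {A : H →L[𝕜] H} (hA : A.IsPositive) (z : H) :
    anorm A z ^ 2 = RCLike.re (inner 𝕜 (A z) z) :=
  Real.sq_sqrt (hA.re_inner_nonneg_left z)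

lemma anorm_add_smul_sq {A : H →L[𝕜] H} (hA : A.IsPositive) (l : 𝕜) (x y : H) :
    anorm A (x + l • y) ^ 2
      = anorm A x ^ 2 + 2 * RCLike.re (l * ainner A x y) + ‖l‖ ^ 2 * anorm A y ^ 2 := by
  have hcross : inner 𝕜 (A (l • y)) x = starRingEnd 𝕜 (l * ainner A x y) := by
    rw [map_smul, inner_smul_left, map_mul, ← inner_conj_symm, ← hA.inner_left_eq_inner_right, ainner]
  rw [anorm_sq hA, anorm_sq hA, anorm_sq hA, map_add, inner_add_left, inner_add_right,
    inner_add_right, hcross, map_smul, inner_smul_left, inner_smul_right, inner_smul_right,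
    ← mul_assoc, RCLike.conj_mul, ← RCLike.ofReal_pow]
  simp only [map_add, RCLike.re_ofReal_mul, RCLike.conj_re, ainner]
  ring

lemma vOrthEps_of_norm_ainner_le {A : H →L[𝕜] H} (hA : A.IsPositive) {ε : ℝ} {x y : H}
    (h : ‖ainner A x y‖ ≤ ε * anorm A x * anorm A y) : VOrthEps A ε x y := by
  intro l
  have hre : -(‖l‖ * ‖ainner A x y‖) ≤ RCLike.re (l * ainner A x y) := by
    rw [← norm_mul]
    exact neg_le_of_abs_le (RCLike.abs_re_le_norm _)
  have hl : ‖l‖ * ‖ainner A x y‖ ≤ ‖l‖ * (ε * anorm A x * anorm A y) :=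
    mul_le_mul_of_nonneg_left h (norm_nonneg l)
  rw [anorm_add_smul_sq hA, anorm_smul]
  nlinarith [sq_nonneg (‖l‖ * anorm A y)]

lemma le_of_forall_pos_le_add_mul {b c d : ℝ} (h : ∀ t > 0, b ≤ c + t * d) : b ≤ c := by
  refine le_of_forall_pos_le_add fun δ hδ => ?_
  have hd : 0 < |d| + 1 := by positivity
  have ht : δ / (|d| + 1) * d ≤ δ := by
    calc δ / (|d| + 1) * d ≤ δ / (|d| + 1) * (|d| + 1) := by
          gcongr
          linarith [le_abs_self d]
      _ = δ := div_mul_cancel₀ δ hd.ne'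
  linarith [h _ (div_pos hδ hd)]

lemma norm_ainner_le_of_vOrthEps {A : H →L[𝕜] H} (hA : A.IsPositive) {ε : ℝ} {x y : H}
    (h : VOrthEps A ε x y) : ‖ainner A x y‖ ≤ ε * anorm A x * anorm A y := by
  obtain ⟨c, hc1, hc⟩ := RCLike.exists_norm_eq_mul_self (ainner A x y)
  refine le_of_forall_pos_le_add_mul (d := anorm A y ^ 2 / 2) fun t ht => ?_
  have hineq := h (-(t : 𝕜) * c)
  have hnorm : ‖-(t : 𝕜) * c‖ = t := by
    rw [norm_mul, norm_neg, hc1, RCLike.norm_ofReal, abs_of_pos ht, mul_one]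
  have hre : RCLike.re (-(t : 𝕜) * c * ainner A x y) = -(t * ‖ainner A x y‖) := by
    rw [mul_assoc, ← hc, ← RCLike.ofReal_neg, ← RCLike.ofReal_mul, RCLike.ofReal_re, neg_mul]
  rw [anorm_add_smul_sq hA, anorm_smul, hnorm, hre] at hineq
  nlinarith

end

theorem stmt_4_general {𝕜 H : Type*} [RCLike 𝕜] [NormedAddCommGroup H] [InnerProductSpace 𝕜 H]
    (A : H →L[𝕜] H) (hA : A.IsPositive) (ε : ℝ)
    (x y : H) :
    ‖ainner A x y‖ ≤ ε * anorm A x * anorm A y ↔ VOrthEps A ε x y :=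
  ⟨vOrthEps_of_norm_ainner_le hA, norm_ainner_le_of_vOrthEps hA⟩

/-- `x ⊥_A^ε y` iff `x ⊥_{ε(A)} y`, i.e. `|⟨x, y⟩_A| ≤ ε‖x‖_A‖y‖_A` iff
`‖x + λy‖_A² ≥ ‖x‖_A² − 2ε‖x‖_A‖λy‖_A` for all scalars `λ`. -/
theorem stmt_4 {𝕜 H : Type*} [RCLike 𝕜] [NormedAddCommGroup H] [InnerProductSpace 𝕜 H]
    [CompleteSpace H] (A : H →L[𝕜] H) (hA : A.IsPositive) (ε : ℝ) (hε0 : 0 ≤ ε) (hε1 : ε < 1)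
    (x y : H) :
    ‖ainner A x y‖ ≤ ε * anorm A x * anorm A y ↔ VOrthEps A ε x y :=
  stmt_4_general A hA ε x y
end

section
/- Let H be a real Hilbert space, A a positive operator on H, and C an A-bounded operator on H. If M_A^C ∩ closure(R(A)) = S_{H(A)} ∩ closure(R(A)), where R(A) is the range of A, then M_A^C = S_{H(A)}. -/
/-! Split `x = y + d` with `y` in the closure of `R(A)` and `d ∈ ker A = R(A)ᗮ`. Then
`‖d‖_A = 0`, and `A`-boundedness gives `‖C d‖_A = 0`. Adding an `A`-null vector does not change
the `A`-seminorm, so `‖x‖_A = ‖y‖_A` and `‖C x‖_A = ‖C y‖_A`, and the hypothesis applied to `y`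
puts `x` in `M_A^C`. -/

section closureRange

variable {𝕜 H : Type*} [RCLike 𝕜] [NormedAddCommGroup H] [InnerProductSpace 𝕜 H]
  [CompleteSpace H]

lemma IsSelfAdjoint.exists_mem_closure_range_apply_sub_eq_zero {A : H →L[𝕜] H}
    (hA : IsSelfAdjoint A) (x : H) :
    ∃ y ∈ (LinearMap.range (A : H →ₗ[𝕜] H)).topologicalClosure, A (x - y) = 0 := by
  set R := LinearMap.range (A : H →ₗ[𝕜] H)
  set K := R.topologicalClosure
  have : CompleteSpace K := R.isClosed_topologicalClosure.completeSpace_coe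
  refine ⟨K.starProjection x, K.starProjection_apply_mem x, ?_⟩
  have hker : x - K.starProjection x ∈ Rᗮ :=
    Submodule.orthogonal_le R.le_topologicalClosure (K.sub_starProjection_mem_orthogonal x)
  rwa [A.orthogonal_range, hA.adjoint_eq] at hker

end closureRange

section anorm

variable {H : Type*} [NormedAddCommGroup H] [InnerProductSpace ℝ H] {A : H →L[ℝ] H}

namespace ContinuousLinearMap.IsPositive

lemma inner_apply_eq_zero_of_inner_self (hA : A.IsPositive) {w : H}
    (hw : inner ℝ (A w) w = 0) (u : H) : inner ℝ (A u) w = 0 := by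
  by_contra ha
  set a := inner ℝ (A u) w
  set b := inner ℝ (A u) u
  have hb : 0 ≤ b := by simpa using hA.re_inner_nonneg_left u
  -- `t ↦ ⟪A (u + t w), u + t w⟫ = b + 2 t a` is affine and nonnegative, so `a = 0`.
  set t := -(b + 1) / (2 * a)
  have hwu : inner ℝ (A w) u = a := by
    rw [hA.inner_left_eq_inner_right, real_inner_comm]
  have hexp : inner ℝ (A (u + t • w)) (u + t • w) = b + 2 * t * a := by
    simp only [map_add, map_smul, inner_add_left, inner_add_right, real_inner_smul_left,
      real_inner_smul_right, hwu, hw]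
    ring
  have hnonneg : 0 ≤ inner ℝ (A (u + t • w)) (u + t • w) := by
    simpa using hA.re_inner_nonneg_left (u + t • w)
  have hta : 2 * t * a = -(b + 1) := by simp only [t]; field_simp
  linarith

lemma inner_self_eq_zero_of_anorm_eq_zero (hA : A.IsPositive) {w : H}
    (hw : anorm A w = 0) : inner ℝ (A w) w = 0 :=
  le_antisymm (Real.sqrt_eq_zero'.mp hw) (by simpa using hA.re_inner_nonneg_left w)

lemma anorm_add_eq_of_anorm_eq_zero (hA : A.IsPositive) {w : H}
    (hw : anorm A w = 0) (u : H) : anorm A (u + w) = anorm A u := by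
  have hww := hA.inner_self_eq_zero_of_anorm_eq_zero hw
  have huw := hA.inner_apply_eq_zero_of_inner_self hww u
  have hwu : inner ℝ (A w) u = 0 := by
    rw [hA.inner_left_eq_inner_right, real_inner_comm, huw]
  simp only [anorm, RCLike.re_to_real, map_add, inner_add_left, inner_add_right, hww, huw, hwu,
    add_zero]

end ContinuousLinearMap.IsPositive

lemma anorm_eq_zero_of_apply_eq_zero {w : H} (hw : A w = 0) : anorm A w = 0 := by
  simp [anorm, hw]

lemma IsABounded.anorm_apply_eq_zero {C : H →L[ℝ] H} (hC : IsABounded A C) {w : H}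
    (hw : anorm A w = 0) : anorm A (C w) = 0 := by
  obtain ⟨c, -, hbound⟩ := hC
  exact le_antisymm (by simpa [hw] using hbound w) (Real.sqrt_nonneg _)

end anorm

/-- if `M_A^C ∩ closure(R(A)) = S_{H(A)} ∩ closure(R(A))` then `M_A^C = S_{H(A)}`. -/
theorem stmt_7 {H : Type*} [NormedAddCommGroup H] [InnerProductSpace ℝ H] [CompleteSpace H]
    (A C : H →L[ℝ] H) (hA : A.IsPositive) (hC : IsABounded A C)
    (h : {x : H | anorm A x = 1 ∧ anorm A (C x) = opAnorm A C} ∩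
          ((LinearMap.range (A : H →ₗ[ℝ] H)).topologicalClosure : Set H) =
        {x : H | anorm A x = 1} ∩
          ((LinearMap.range (A : H →ₗ[ℝ] H)).topologicalClosure : Set H)) :
    {x : H | anorm A x = 1 ∧ anorm A (C x) = opAnorm A C} = {x : H | anorm A x = 1} := by
  ext x
  refine ⟨fun hx => hx.1, fun hx => ⟨hx, ?_⟩⟩
  obtain ⟨y, hyK, hd⟩ := hA.isSelfAdjoint.exists_mem_closure_range_apply_sub_eq_zero x
  have hd0 : anorm A (x - y) = 0 := anorm_eq_zero_of_apply_eq_zero hd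
  have hyS : anorm A y = 1 := by
    rwa [← hA.anorm_add_eq_of_anorm_eq_zero hd0 y, add_sub_cancel]
  have hyM := ((Set.ext_iff.mp h y).mpr ⟨hyS, hyK⟩).1
  calc anorm A (C x) = anorm A (C y + C (x - y)) := by rw [← map_add, add_sub_cancel]
    _ = anorm A (C y) := hA.anorm_add_eq_of_anorm_eq_zero (hC.anorm_apply_eq_zero hd0) _
    _ = opAnorm A C := hyM.2
end
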